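/- Let A ∈ ℤ^{m×n} have full row rank and let W' be an invertible m×m matrix whose columns are columns of A. Then there exist k_1, …, k_m ∈ ℤ_{≥0} such that the point z := W'k (a nonnegative integer combination of the columns of W') satisfies: for every b ∈ (cone(W') + z) ∩ ℤ^m, either P(A,b) = ∅ or σ(A,b) ≤ m + Ω(|det W'|). -/

import Mathlib

/-!
The classes of `ℤ^m` modulo the lattice `W'ℤ^m` form a finite abelian group `G` of order
`|det W'|`. If a nonnegative `u` has minimal support among the nonnegative vectors `u'` with
`Au' ≡ Au`, no summand `u_j A_j` lies in the subgroup of `G` generated by the others (it could be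
absorbed into them otherwise), so adding the summands one by one strictly enlarges the generated
subgroup, each time multiplying its order by an integer `≥ 2`: the support has at most `Ω(|G|)`
elements. Fix such a `u` in each of the finitely many classes and take `k ≥ W'⁻¹Au` coordinatewise
for all of them. For `b ∈ cone(W') + W'k` solvable in the class of `u`, the integer vector
`q = W'⁻¹(b - Au)` is then nonnegative, and `u` plus `q` placed on the columns of `W'` solves
`Ax = b` with support at most `Ω(|det W'|) + m`.
-/

/-- Ω(k): number of prime factors of `k` counted with multiplicity (`Ω 1 = 0`). -/
noncomputable def bigOmega (k : ℕ) : ℕ := k.primeFactorsList.length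

/-- The cone generated by the columns of an integer matrix `W`, as a subset of `ℝ^m`. -/
def coneOf {m r : ℕ} (W : Matrix (Fin m) (Fin r) ℤ) : Set (Fin m → ℝ) :=
  {y | ∃ c : Fin r → ℝ, (∀ j, 0 ≤ c j) ∧ y = ∑ j, c j • fun i => (W i j : ℝ)}

/-- σ(A,b) ∈ ℕ∞: the minimal support size of a nonnegative integer solution of `A x = b`,
`⊤` if no solution exists. -/
noncomputable def sigmaFn {m n : ℕ} (A : Matrix (Fin m) (Fin n) ℤ) (b : Fin m → ℤ) : ℕ∞ :=
  sInf {k : ℕ∞ | ∃ x : Fin n → ℤ, (∀ j, 0 ≤ x j) ∧ A.mulVec x = b ∧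
    (Set.ncard {j | x j ≠ 0} : ℕ∞) = k}

open Finset Matrix

theorem bigOmega_eq_cardFactors (k : ℕ) : bigOmega k = ArithmeticFunction.cardFactors k :=
  ArithmeticFunction.cardFactors_apply.symm

theorem bigOmega_mul {a b : ℕ} (ha : a ≠ 0) (hb : b ≠ 0) :
    bigOmega (a * b) = bigOmega a + bigOmega b := by
  simp only [bigOmega_eq_cardFactors]
  exact ArithmeticFunction.cardFactors_mul ha hb

theorem bigOmega_pos_iff {k : ℕ} : 0 < bigOmega k ↔ 1 < k := by
  rw [bigOmega_eq_cardFactors, ArithmeticFunction.cardFactors_pos_iff_one_lt]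

theorem bigOmega_le_of_dvd {a b : ℕ} (h : a ∣ b) (hb : b ≠ 0) : bigOmega a ≤ bigOmega b := by
  obtain ⟨c, rfl⟩ := h
  rw [bigOmega_mul (left_ne_zero_of_mul hb) (right_ne_zero_of_mul hb)]
  exact Nat.le_add_right _ _

namespace AddSubgroup

variable {G : Type*} [AddCommGroup G] [Finite G]

theorem bigOmega_card_lt_of_lt {H K : AddSubgroup G} (h : H < K) :
    bigOmega (Nat.card H) < bigOmega (Nat.card K) := by
  have hcard : Nat.card K = Nat.card H * H.relIndex K := by
    rw [← relIndex_bot_left, ← relIndex_bot_left, relIndex_mul_relIndex _ _ _ bot_le h.le]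
  have hidx0 : H.relIndex K ≠ 0 := right_ne_zero_of_mul (hcard ▸ Nat.card_pos.ne')
  have hidx : 1 < H.relIndex K :=
    lt_of_le_of_ne (Nat.one_le_iff_ne_zero.mpr hidx0)
      (fun h1 => h.not_ge (relIndex_eq_one.mp h1.symm))
  rw [hcard, bigOmega_mul Nat.card_pos.ne' hidx0]
  exact Nat.lt_add_of_pos_right (bigOmega_pos_iff.mpr hidx)

theorem card_le_bigOmega_card_closure_of_notMem {ι : Type*} [DecidableEq ι] (w : ι → G)
    (s : Finset ι) (hs : ∀ i ∈ s, w i ∉ closure (w '' ↑(s.erase i))) :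
    s.card ≤ bigOmega (Nat.card (closure (w '' ↑s))) := by
  induction s using Finset.induction_on with
  | empty => simp
  | insert a t ha ih =>
    have ht : ∀ i ∈ t, w i ∉ closure (w '' ↑(t.erase i)) := by
      intro i hi hmem
      refine hs i (mem_insert_of_mem hi) (closure_mono ?_ hmem)
      exact Set.image_mono (coe_subset.mpr
        (erase_subset_erase i (subset_insert a t)))
    have hlt : closure (w '' ↑t) < closure (w '' ↑(insert a t)) := by
      refine lt_of_le_of_ne (closure_mono
        (Set.image_mono (coe_subset.mpr (subset_insert a t)))) fun heq => ?_
      refine hs a (mem_insert_self _ _) ?_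
      rw [erase_insert ha, heq]
      exact subset_closure (Set.mem_image_of_mem w (mem_coe.mpr (mem_insert_self a t)))
    rw [card_insert_of_notMem ha]
    exact (Nat.succ_le_of_lt (lt_of_le_of_lt (ih ht) (bigOmega_card_lt_of_lt hlt)))

theorem exists_sum_nsmul_eq_of_mem_closure_image {ι : Type*} {w : ι → G} {s : Finset ι} {y : G}
    (hy : y ∈ closure (w '' ↑s)) :
    ∃ c : ι → ℕ, ∑ j ∈ s, c j • w j = y := by
  rwa [← mem_toAddSubmonoid, closure_toAddSubmonoid_of_finite,
    ← Submodule.span_nat_eq_addSubmonoidClosure, Submodule.mem_toAddSubmonoid,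
    Submodule.mem_span_image_finset_iff_exists_fun'] at hy

end AddSubgroup

section SmallSupport

variable {ι G : Type*} [Fintype ι] [DecidableEq ι] [AddCommGroup G] [Finite G]

theorem exists_smaller_support_of_mem_closure (v : ι → G) {x : ι → ℤ} (hx : 0 ≤ x) {i : ι}
    (hi : x i ≠ 0) (hmem : x i • v i ∈
      AddSubgroup.closure ((fun j => x j • v j) '' ↑(({j | x j ≠ 0} : Finset ι).erase i))) :
    ∃ x' : ι → ℤ, 0 ≤ x' ∧ ∑ j, x' j • v j = ∑ j, x j • v j ∧
      #{j | x' j ≠ 0} < #{j | x j ≠ 0} := by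
  set S : Finset ι := {j | x j ≠ 0}
  have hiS : i ∈ S := by simpa [S] using hi
  obtain ⟨c, hc⟩ := AddSubgroup.exists_sum_nsmul_eq_of_mem_closure_image hmem
  -- by `hc`, dropping the `i`-th term and scaling each other term by `1 + c j` keeps the sum
  let x' : ι → ℤ := fun j => if j = i then 0 else x j + c j * x j
  have hsupp : ∀ j, x' j ≠ 0 → j ∈ S.erase i := by
    intro j hj
    by_cases hji : j = i
    · simp [x', hji] at hj
    · refine mem_erase.mpr ⟨hji, ?_⟩
      by_contra hjS
      simp only [S, mem_filter, mem_univ, true_and, not_not] at hjS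
      simp [x', hji, hjS] at hj
  refine ⟨x', fun j => ?_, ?_, ?_⟩
  · by_cases hji : j = i
    · simp [x', hji]
    · simp only [x', if_neg hji, Pi.zero_apply]
      exact add_nonneg (hx j) (mul_nonneg (Nat.cast_nonneg _) (hx j))
  · have hx'sum : ∑ j, x' j • v j = ∑ j ∈ S.erase i, x' j • v j :=
      (sum_subset (subset_univ _) fun j _ hj => by
        rw [show x' j = 0 from not_not.mp (mt (hsupp j) hj), zero_smul]).symm
    have hxsum : ∑ j, x j • v j = ∑ j ∈ S, x j • v j :=
      (sum_subset (subset_univ _) fun j _ hj => by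
        rw [show x j = 0 by simpa [S] using hj, zero_smul]).symm
    rw [hx'sum, hxsum, ← add_sum_erase S _ hiS, ← hc, ← sum_add_distrib]
    refine sum_congr rfl fun j hj => ?_
    simp only [x', if_neg (ne_of_mem_erase hj), add_smul, mul_smul, natCast_zsmul, add_comm]
  · calc #{j | x' j ≠ 0} ≤ #(S.erase i) := card_le_card fun j hj => hsupp j (by simpa using hj)
      _ < #S := card_erase_lt_of_mem hiS

theorem exists_nonneg_sum_smul_eq_and_card_support_le (v : ι → G) {x : ι → ℤ} (hx : 0 ≤ x) :
    ∃ u : ι → ℤ, 0 ≤ u ∧ ∑ j, u j • v j = ∑ j, x j • v j ∧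
      #{j | u j ≠ 0} ≤ bigOmega (Nat.card G) := by
  induction hN : #{j | x j ≠ 0} using Nat.strong_induction_on generalizing x with
  | _ N ih =>
  set w : ι → G := fun j => x j • v j
  by_cases hirr : ∀ i ∈ ({j | x j ≠ 0} : Finset ι),
      w i ∉ AddSubgroup.closure (w '' ↑(({j | x j ≠ 0} : Finset ι).erase i))
  · exact ⟨x, hx, rfl, (AddSubgroup.card_le_bigOmega_card_closure_of_notMem w _ hirr).trans
      (bigOmega_le_of_dvd (AddSubgroup.card_addSubgroup_dvd_card _) Nat.card_pos.ne')⟩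
  · push Not at hirr
    obtain ⟨i, hi, hmem⟩ := hirr
    obtain ⟨x', hx', hsum, hlt⟩ :=
      exists_smaller_support_of_mem_closure v hx (by simpa using hi) hmem
    obtain ⟨u, hu, husum, hucard⟩ := ih _ (hN ▸ hlt) hx' rfl
    exact ⟨u, hu, husum.trans hsum, hucard⟩

theorem LinearMap.exists_nonneg_eq_and_card_support_le (φ : (ι → ℤ) →ₗ[ℤ] G) {x : ι → ℤ}
    (hx : 0 ≤ x) :
    ∃ u : ι → ℤ, 0 ≤ u ∧ φ u = φ x ∧ #{j | u j ≠ 0} ≤ bigOmega (Nat.card G) := by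
  have hφ : ∀ y : ι → ℤ, φ y = ∑ j, y j • φ (Pi.single j 1) := fun y => by
    conv_lhs => rw [pi_eq_sum_univ' y]
    simp only [map_sum, map_zsmul]
  obtain ⟨u, hu, hsum, hucard⟩ :=
    exists_nonneg_sum_smul_eq_and_card_support_le (fun j => φ (Pi.single j 1)) hx
  exact ⟨u, hu, by rw [hφ u, hφ x, hsum], hucard⟩

end SmallSupport

namespace Matrix

theorem natCard_quotient_range_mulVecLin {n : Type*} [Fintype n] [DecidableEq n]
    (M : Matrix n n ℤ) (h : M.det ≠ 0) :
    Nat.card ((n → ℤ) ⧸ LinearMap.range M.mulVecLin) = M.det.natAbs := by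
  let bN : Module.Basis n ℤ (LinearMap.range M.mulVecLin) :=
    (Pi.basisFun ℤ n).map (LinearEquiv.ofInjective _ (mulVec_injective_of_det_ne_zero h))
  rw [← Submodule.natAbs_det_basis_change (Pi.basisFun ℤ n) _ bN, Pi.basisFun_det_apply,
    ← det_transpose]
  congr
  ext i j
  simp only [bN, Function.comp_apply, of_apply, Module.Basis.map_apply,
    Pi.basisFun_apply]
  exact congrFun (M.mulVec_single_one i) j

theorem map_intCast_mulVec {m n : Type*} [Fintype n] (M : Matrix m n ℤ) (v : n → ℤ) :
    M.map (Int.cast : ℤ → ℝ) *ᵥ (fun j => (v j : ℝ)) = fun i => ((M *ᵥ v) i : ℝ) :=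
  funext fun i => (RingHom.map_mulVec (Int.castRingHom ℝ) M v i).symm

end Matrix

theorem mem_coneOf_iff {m r : ℕ} (W : Matrix (Fin m) (Fin r) ℤ) (y : Fin m → ℝ) :
    y ∈ coneOf W ↔ ∃ c, 0 ≤ c ∧ y = W.map (Int.cast : ℤ → ℝ) *ᵥ c := by
  refine exists_congr fun c => and_congr Iff.rfl (Eq.congr_right ?_)
  ext i
  simp [Matrix.mulVec, dotProduct, mul_comm]

theorem exists_translate_coneOf_sub_eq_mulVec_nonneg {m : ℕ} {ι : Type*} [Finite ι]
    (W : Matrix (Fin m) (Fin m) ℤ) (hW : W.det ≠ 0) (y : ι → Fin m → ℤ) :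
    ∃ k : Fin m → ℕ, ∀ b : Fin m → ℤ,
      (fun i => (b i : ℝ)) ∈
        (fun z => z + fun i => ((W *ᵥ fun j => (k j : ℤ)) i : ℝ)) '' coneOf W →
      ∀ t q, b - y t = W *ᵥ q → 0 ≤ q := by
  have := Fintype.ofFinite ι
  set Wr := W.map (Int.cast : ℤ → ℝ)
  have hWr : Wr.det ≠ 0 := by
    rw [← Int.cast_det]
    exact_mod_cast hW
  choose r hr using fun t => Matrix.mulVec_surjective_iff_isUnit.mpr
    ((Matrix.isUnit_iff_isUnit_det _).mpr (isUnit_iff_ne_zero.mpr hWr)) fun i => (y t i : ℝ)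
  set k : Fin m → ℕ := fun i => univ.sup fun t => ⌈r t i⌉₊
  refine ⟨k, ?_⟩
  rintro b ⟨z, hz, hbz⟩ t q hq
  obtain ⟨c, hc, rfl⟩ := (mem_coneOf_iff W z).mp hz
  have hb : (fun i => (b i : ℝ)) = Wr *ᵥ (c + fun j => (k j : ℝ)) := by
    rw [← hbz, Matrix.mulVec_add, ← Matrix.map_intCast_mulVec]
    simp only [Int.cast_natCast, Wr]
  have hqr : (fun i => (q i : ℝ)) = c + (fun j => (k j : ℝ)) - r t := by
    refine Matrix.mulVec_injective_of_det_ne_zero hWr ?_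
    rw [Matrix.map_intCast_mulVec, ← hq, Matrix.mulVec_sub, ← hb, hr]
    ext i
    simp
  intro i
  have hle : r t i ≤ k i :=
    (Nat.le_ceil _).trans (Nat.cast_le.mpr (le_sup (f := fun t => ⌈r t i⌉₊) (mem_univ t)))
  have hqi : (q i : ℝ) = c i + k i - r t i := congrFun hqr i
  have hci : 0 ≤ c i := hc i
  exact_mod_cast (show (0 : ℝ) ≤ q i by linarith)

theorem exists_nonneg_mulVec_eq_of_forall_col_eq {m n r : Type*} [Fintype n] [DecidableEq n]
    [Fintype r] {A : Matrix m n ℤ} {W : Matrix m r ℤ}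
    (hsub : ∀ j, ∃ j', (fun i => W i j) = fun i => A i j') {q : r → ℤ} (hq : 0 ≤ q) :
    ∃ z : n → ℤ, 0 ≤ z ∧ A *ᵥ z = W *ᵥ q ∧ #{l | z l ≠ 0} ≤ Fintype.card r := by
  choose J hJ using hsub
  let z : n → ℤ := ∑ j, Pi.single (J j) (q j)
  have hz : ∀ l ∉ univ.image J, z l = 0 := fun l hl => by
    simp only [z, Finset.sum_apply]
    exact sum_eq_zero fun j _ => Pi.single_eq_of_ne
      (fun h => hl (by rw [h]; exact mem_image_of_mem J (mem_univ j))) _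
  refine ⟨z, sum_nonneg fun j _ => Pi.single_nonneg.mpr (hq j), ?_, ?_⟩
  · ext i
    simp only [z, mulVec_sum, mulVec_single, Finset.sum_apply, Pi.smul_apply, col_apply,
      op_smul_eq_mul, ← congrFun (hJ _) i]
    rfl
  · calc #{l | z l ≠ 0} ≤ #(univ.image J) :=
          card_le_card fun l hl => by_contra fun h => (mem_filter.mp hl).2 (hz l h)
      _ ≤ Fintype.card r := card_image_le

theorem ncard_setOf_add_ne_zero_le {ι M : Type*} [Fintype ι] [DecidableEq ι] [AddZeroClass M]
    [DecidableEq M] (u z : ι → M) :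
    {j | (u + z) j ≠ 0}.ncard ≤ #{j | u j ≠ 0} + #{j | z j ≠ 0} := by
  rw [Set.ncard_eq_toFinset_card', Set.toFinset_ofPred]
  refine (card_le_card fun j => ?_).trans (card_union_le _ _)
  simp only [mem_filter, mem_univ, true_and, mem_union, Pi.add_apply]
  contrapose!
  rintro ⟨hu, hz⟩
  rw [hu, hz, add_zero]

theorem exists_translated_subcone_with_small_support_general {m n : ℕ}
    (A : Matrix (Fin m) (Fin n) ℤ)
    (W' : Matrix (Fin m) (Fin m) ℤ) (hdet : W'.det ≠ 0)
    (hsub : ∀ j : Fin m, ∃ j' : Fin n, (fun i => W' i j) = fun i => A i j') :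
    ∃ k : Fin m → ℕ,
      ∀ b : Fin m → ℤ,
        (fun i => (b i : ℝ)) ∈
          (fun y => y + fun i => ((W'.mulVec fun j => (k j : ℤ)) i : ℝ)) '' coneOf W' →
        (¬ ∃ x : Fin n → ℤ, (∀ j, 0 ≤ x j) ∧ A.mulVec x = b) ∨
          sigmaFn A b ≤ ((m + bigOmega W'.det.natAbs : ℕ) : ℕ∞) := by
  classical
  set L := LinearMap.range W'.mulVecLin
  have hcard : Nat.card ((Fin m → ℤ) ⧸ L) = W'.det.natAbs :=
    W'.natCard_quotient_range_mulVecLin hdet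
  have : Finite ((Fin m → ℤ) ⧸ L) :=
    Nat.finite_of_card_ne_zero (hcard ▸ Int.natAbs_ne_zero.mpr hdet)
  let φ := L.mkQ ∘ₗ A.mulVecLin
  have hrep : ∀ g, ∃ u : Fin n → ℤ, (∃ x, 0 ≤ x ∧ φ x = g) →
      0 ≤ u ∧ φ u = g ∧ #{j | u j ≠ 0} ≤ bigOmega W'.det.natAbs := by
    intro g
    by_cases hg : ∃ x, 0 ≤ x ∧ φ x = g
    · obtain ⟨x, hx, rfl⟩ := hg
      obtain ⟨u, hu, hux, hucard⟩ := φ.exists_nonneg_eq_and_card_support_le hx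
      exact ⟨u, fun _ => ⟨hu, hux, hcard ▸ hucard⟩⟩
    · exact ⟨0, fun h => absurd h hg⟩
  choose U hU using hrep
  obtain ⟨k, hk⟩ := exists_translate_coneOf_sub_eq_mulVec_nonneg W' hdet fun g => A *ᵥ U g
  refine ⟨k, fun b hb => or_iff_not_imp_left.mpr fun hsol => ?_⟩
  obtain ⟨x, hx, rfl⟩ := not_not.mp hsol
  obtain ⟨hu, hux, hucard⟩ := hU (φ x) ⟨x, hx, rfl⟩
  obtain ⟨q, hq⟩ : A *ᵥ x - A *ᵥ U (φ x) ∈ L := (Submodule.Quotient.eq L).mp hux.symm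
  obtain ⟨z, hz, hAz, hzcard⟩ :=
    exists_nonneg_mulVec_eq_of_forall_col_eq hsub (hk _ hb _ q hq.symm)
  refine sInf_le_of_le ⟨U (φ x) + z, add_nonneg hu hz, ?_, rfl⟩ ?_
  · rw [mulVec_add, hAz, ← mulVecLin_apply W' q, hq, add_sub_cancel]
  · rw [Fintype.card_fin] at hzcard
    exact Nat.cast_le.mpr ((ncard_setOf_add_ne_zero_le _ _).trans (by omega))

theorem exists_translated_subcone_with_small_support {m n : ℕ}
    (A : Matrix (Fin m) (Fin n) ℤ) (hrank : A.rank = m)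
    (W' : Matrix (Fin m) (Fin m) ℤ) (hdet : W'.det ≠ 0)
    (hsub : ∀ j : Fin m, ∃ j' : Fin n, (fun i => W' i j) = fun i => A i j') :
    ∃ k : Fin m → ℕ,
      ∀ b : Fin m → ℤ,
        (fun i => (b i : ℝ)) ∈
          (fun y => y + fun i => ((W'.mulVec fun j => (k j : ℤ)) i : ℝ)) '' coneOf W' →
        (¬ ∃ x : Fin n → ℤ, (∀ j, 0 ≤ x j) ∧ A.mulVec x = b) ∨
          sigmaFn A b ≤ ((m + bigOmega W'.det.natAbs : ℕ) : ℕ∞) :=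
  exists_translated_subcone_with_small_support_general A W' hdet hsub
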